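/- arXiv:math/0602055 — 3 statements merged into one kernel-verified Lean document; each statement's English description precedes it below -/
import Mathlib

section
/- Let S be an invertible symmetric 2n×2n complex matrix, 𝔤 := {X ∈ Mat_{2n}(ℂ) : Xᵀ S + S X = 0}, and for i,j ∈ [2n] set X_{i,j} := E_{i,j} − S⁻¹ E_{j,i} S ∈ 𝔤 and X̃_{i,j} := Σ_{k∈[2n]} S_{k,j} ι(X_{i,k}) ∈ U(𝔤). Then the matrix (X̃_{i,j}) is alternating, and its Pfaffian Pf(𝑿) := Pf((X̃_{i,j})) lies in the center of U(𝔤), i.e. it commutes with every element of U(𝔤). -/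
/-!
With `X̃_{ij} = ι((E_{ij} - E_{ji}) S)` the matrix is visibly alternating, and for `Z ∈ 𝔤` the
bracket with `ι Z` acts on its entries by `X̃ ↦ Zᵀ X̃ + X̃ Z`. Applied to the permutation
expansion of the Pfaffian, this derivation replaces one entry `σ t` by some `k`, with coefficient
`Z_{k, σ t}`. The terms with `k = σ t` add up to `tr Z • Pf X̃`. A term with `k = σ t'`, `t ≠ t'`,
cancels the term of `σ ∘ (t t')` in which the entry at `t'` is replaced by the same `k`: same
monomial and coefficient, opposite sign. Finally `Zᵀ = -S Z S⁻¹` forces `tr Z = 0`, and `ι(𝔤)`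
generates `U(𝔤)`.
-/

open Matrix

set_option synthInstance.maxHeartbeats 1000000
set_option maxHeartbeats 1000000

noncomputable section

/-- Noncommutative Pfaffian of a matrix `A` with entries in a `ℂ`-algebra satisfying
`A_{j,i} = −A_{i,j}`:
`Pf(A) := (1/(2^m m!)) Σ_{σ∈S_{2m}} sgn(σ) A_{σ(1),σ(2)} ⋯ A_{σ(2m−1),σ(2m)}`
(junk value `0` if the size is odd). -/
def ncPf {A : Type*} [Ring A] [Algebra ℂ A] {m : ℕ} (M : Matrix (Fin m) (Fin m) A) : A :=
  if hm : m % 2 = 0 then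
    ((2 : ℂ) ^ (m / 2) * (m / 2).factorial)⁻¹ •
      ∑ σ : Equiv.Perm (Fin m),
        (Equiv.Perm.sign σ : ℤ) •
          (List.ofFn fun i : Fin (m / 2) =>
            M (σ ⟨2 * i.1, by have := i.2; omega⟩)
              (σ ⟨2 * i.1 + 1, by have := i.2; omega⟩)).prod
  else 0


open Equiv Function

section SignedSum

variable {ι R A : Type*} [Fintype ι] [DecidableEq ι] [Semiring R] [AddCommGroup A] [Module R A]
  (Z : Matrix ι ι R) (Φ : (ι → ι) → A)

theorem sum_sign_smul_update_eq_neg {t t' : ι} (h : t ≠ t') :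
    ∑ σ : Perm ι, (Perm.sign σ : ℤ) • Z (σ t') (σ t) • Φ (update σ t (σ t')) =
      -∑ σ : Perm ι, (Perm.sign σ : ℤ) • Z (σ t) (σ t') • Φ (update σ t' (σ t)) := by
  rw [← Equiv.sum_comp (Equiv.mulRight (swap t t')), ← Finset.sum_neg_distrib]
  refine Finset.sum_congr rfl fun σ _ => ?_
  have hupd : update (σ ∘ swap t t') t (σ t) = update σ t' (σ t) := by
    ext x
    rcases eq_or_ne x t with rfl | hx
    · simp [h]
    rcases eq_or_ne x t' with rfl | hx'
    · simp [h.symm]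
    · simp [hx, hx', swap_apply_of_ne_of_ne hx hx']
  simp [Perm.sign_mul, Perm.sign_swap h, hupd]

theorem sum_sign_smul_sum_update :
    ∑ σ : Perm ι, (Perm.sign σ : ℤ) • ∑ t, ∑ k, Z k (σ t) • Φ (update σ t k) =
      Z.trace • ∑ σ : Perm ι, (Perm.sign σ : ℤ) • Φ σ := by
  set T : ι × ι → A := fun p =>
    ∑ σ : Perm ι, (Perm.sign σ : ℤ) • Z (σ p.2) (σ p.1) • Φ (update σ p.1 (σ p.2)) with hT
  have hreindex : ∑ σ : Perm ι, (Perm.sign σ : ℤ) • ∑ t, ∑ k, Z k (σ t) • Φ (update σ t k) =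
      ∑ p, T p := by
    calc _ = ∑ σ : Perm ι, ∑ t, ∑ t',
            (Perm.sign σ : ℤ) • Z (σ t') (σ t) • Φ (update σ t (σ t')) := by
          refine Finset.sum_congr rfl fun σ _ => ?_
          simp only [Finset.smul_sum]
          exact Finset.sum_congr rfl fun t _ => (Equiv.sum_comp σ _).symm
      _ = ∑ p, T p := by
          rw [Finset.sum_comm, Fintype.sum_prod_type]
          exact Finset.sum_congr rfl fun t _ => Finset.sum_comm
  have hdiag : ∑ p ∈ Finset.univ.diag, T p = Z.trace • ∑ σ : Perm ι, (Perm.sign σ : ℤ) • Φ σ := by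
    rw [Finset.sum_diag, Finset.smul_sum, Finset.sum_comm]
    refine Finset.sum_congr rfl fun σ _ => ?_
    simp only [update_eq_self, smul_comm _ (Perm.sign σ : ℤ)]
    rw [← Finset.smul_sum, ← Finset.sum_smul, Equiv.sum_comp σ (fun k => Z k k)]
    rfl
  have hoffDiag : ∑ p ∈ Finset.univ.offDiag, T p = 0 :=
    Finset.sum_involution (fun p _ => p.swap)
      (fun p hp => by
        simp only [hT, Prod.fst_swap, Prod.snd_swap]
        rw [sum_sign_smul_update_eq_neg Z Φ (Finset.mem_offDiag.mp hp).2.2]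
        exact neg_add_cancel _)
      (fun p hp _ hswap => (Finset.mem_offDiag.mp hp).2.2 (congrArg Prod.snd hswap))
      (fun p hp => Finset.mem_offDiag.mpr (by simpa [and_comm, eq_comm] using hp))
      (fun p _ => p.swap_swap)
  rw [hreindex, ← Finset.univ_product_univ, ← Finset.diag_union_offDiag,
    Finset.sum_union (Finset.disjoint_diag_offDiag _), hdiag, hoffDiag, add_zero]

end SignedSum

section Pairing

variable {m : ℕ}

def pairFst (i : Fin (m / 2)) : Fin m := ⟨2 * i.1, by omega⟩

def pairSnd (i : Fin (m / 2)) : Fin m := ⟨2 * i.1 + 1, by omega⟩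

@[simp]
theorem pairFst_inj {i j : Fin (m / 2)} : (pairFst i : Fin m) = pairFst j ↔ i = j := by
  simp [pairFst, Fin.ext_iff]

@[simp]
theorem pairSnd_inj {i j : Fin (m / 2)} : (pairSnd i : Fin m) = pairSnd j ↔ i = j := by
  simp [pairSnd, Fin.ext_iff]

@[simp]
theorem pairFst_ne_pairSnd (i j : Fin (m / 2)) : (pairFst i : Fin m) ≠ pairSnd j := by
  simp only [pairFst, pairSnd, ne_eq, Fin.ext_iff]
  omega

@[simp]
theorem pairSnd_ne_pairFst (i j : Fin (m / 2)) : (pairSnd i : Fin m) ≠ pairFst j :=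
  (pairFst_ne_pairSnd j i).symm

theorem sum_eq_sum_pairFst_add_pairSnd {β : Type*} [AddCommMonoid β] (hm : m % 2 = 0)
    (f : Fin m → β) :
    ∑ t, f t = ∑ i : Fin (m / 2), (f (pairFst i) + f (pairSnd i)) := by
  rw [← Equiv.sum_comp (finProdFinEquiv.trans (finCongr (by omega : m / 2 * 2 = m))),
    Fintype.sum_prod_type]
  refine Finset.sum_congr rfl fun i _ => ?_
  rw [Fin.sum_univ_two]
  congr 2 <;> ext <;> simp [pairFst, pairSnd]; omega

end Pairing

section PfaffianTerm

variable {A : Type*} [Monoid A] {m : ℕ}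

def ncPfTerm (M : Matrix (Fin m) (Fin m) A) (g : Fin m → Fin m) : A :=
  (List.ofFn fun i : Fin (m / 2) => M (g (pairFst i)) (g (pairSnd i))).prod

theorem ncPfTerm_update_pairFst (M : Matrix (Fin m) (Fin m) A) (g : Fin m → Fin m)
    (i : Fin (m / 2)) (k : Fin m) :
    ncPfTerm M (update g (pairFst i) k) =
      (List.ofFn (update (fun i' => M (g (pairFst i')) (g (pairSnd i'))) i
        (M k (g (pairSnd i))))).prod := by
  rw [ncPfTerm]
  congr 2
  ext i'
  rcases eq_or_ne i' i with rfl | hi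
  · simp
  · simp [hi]

theorem ncPfTerm_update_pairSnd (M : Matrix (Fin m) (Fin m) A) (g : Fin m → Fin m)
    (i : Fin (m / 2)) (k : Fin m) :
    ncPfTerm M (update g (pairSnd i) k) =
      (List.ofFn (update (fun i' => M (g (pairFst i')) (g (pairSnd i'))) i
        (M (g (pairFst i)) k))).prod := by
  rw [ncPfTerm]
  congr 2
  ext i'
  rcases eq_or_ne i' i with rfl | hi
  · simp
  · simp [hi]

end PfaffianTerm

theorem ncPf_eq_sum_ncPfTerm {A : Type*} [Ring A] [Algebra ℂ A] {m : ℕ} (hm : m % 2 = 0)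
    (M : Matrix (Fin m) (Fin m) A) :
    ncPf M = ((2 : ℂ) ^ (m / 2) * (m / 2).factorial)⁻¹ •
      ∑ σ : Perm (Fin m), (Perm.sign σ : ℤ) • ncPfTerm M σ := by
  rw [ncPf, dif_pos hm]
  rfl

section SkewAdjoint

variable {n R : Type*} [Fintype n] [DecidableEq n] [CommRing R] {S : Matrix n n R}

theorem Matrix.trace_eq_zero_of_isSkewAdjoint [NoZeroDivisors R] [CharZero R]
    (hdet : IsUnit S.det) {Z : Matrix n n R} (hZ : S.IsSkewAdjoint Z) : Z.trace = 0 := by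
  have hZt : Zᵀ = -(S * Z * S⁻¹) := by
    rw [← mul_nonsing_inv_cancel_right S Zᵀ hdet, show Zᵀ * S = S * -Z from hZ]
    simp
  have h : Z.trace = -Z.trace := calc
    Z.trace = Zᵀ.trace := (trace_transpose Z).symm
    _ = -(S⁻¹ * (S * Z)).trace := by rw [hZt, trace_neg, trace_mul_comm]
    _ = -Z.trace := by rw [← Matrix.mul_assoc, nonsing_inv_mul _ hdet, Matrix.one_mul]
  exact add_self_eq_zero.mp (by linear_combination h)

theorem sum_smul_single_sub_single (Z : Matrix n n R) (i j : n) :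
    ∑ k, Z k i • (single k j (1 : R) - single j k 1) + ∑ k, Z k j • (single i k 1 - single k i 1) =
      Z * (single i j 1 - single j i 1) + (single i j 1 - single j i 1) * Zᵀ := by
  ext a b
  simp only [Matrix.add_apply, Matrix.sum_apply, Matrix.smul_apply, Matrix.sub_apply,
    Matrix.mul_apply, single_apply, transpose_apply, smul_eq_mul, mul_sub, sub_mul,
    Finset.sum_sub_distrib, mul_ite, ite_mul, mul_one, one_mul, mul_zero, zero_mul, ite_and,
    Finset.sum_ite_irrel, Finset.sum_const_zero, Finset.sum_ite_eq, Finset.sum_ite_eq',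
    Finset.mem_univ, if_true]
  split_ifs <;> abel

theorem isSkewAdjoint_coe (Z : skewAdjointMatricesLieSubalgebra S) :
    S.IsSkewAdjoint (Z : Matrix n n R) :=
  (mem_skewAdjointMatricesSubmodule S _).mp Z.2

def skewSingle (hS : Sᵀ = S) (i j : n) : skewAdjointMatricesLieSubalgebra S :=
  ⟨(single i j 1 - single j i 1) * S, by
    rw [mem_skewAdjointMatricesLieSubalgebra, mem_skewAdjointMatricesSubmodule]
    show ((single i j 1 - single j i 1) * S)ᵀ * S = S * -((single i j 1 - single j i 1) * S)
    rw [transpose_mul, hS, transpose_sub, transpose_single, transpose_single, ← neg_sub,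
      Matrix.mul_neg, Matrix.neg_mul, Matrix.mul_neg, Matrix.mul_assoc]⟩

theorem skewSingle_swap (hS : Sᵀ = S) (i j : n) : skewSingle hS j i = -skewSingle hS i j :=
  Subtype.ext (by push_cast [skewSingle]; rw [← Matrix.neg_mul, neg_sub])

theorem lie_skewSingle (hS : Sᵀ = S) (Z : skewAdjointMatricesLieSubalgebra S) (i j : n) :
    ⁅Z, skewSingle hS i j⁆ = ∑ k, (Z : Matrix n n R) k i • skewSingle hS k j +
      ∑ k, (Z : Matrix n n R) k j • skewSingle hS i k := by
  apply Subtype.ext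
  have hZ : (Z : Matrix n n R)ᵀ * S = S * -(Z : Matrix n n R) := isSkewAdjoint_coe Z
  push_cast [AddSubmonoidClass.coe_finsetSum, skewSingle, Ring.lie_def]
  simp only [← smul_mul_assoc, ← Finset.sum_mul]
  rw [← add_mul, sum_smul_single_sub_single, add_mul, Matrix.mul_assoc _ (Z : Matrix n n R)ᵀ, hZ]
  noncomm_ring

theorem sum_smul_single_eq_single_mul (hS : Sᵀ = S) (i j : n) :
    ∑ k, S k j • single i k (1 : R) = single i j 1 * S := by
  ext a b
  have hSbj : S b j = S j b := by rw [← transpose_apply S j b, hS]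
  simp [Matrix.sum_apply, Matrix.mul_apply, single_apply, ite_and, hSbj]

theorem sum_smul_single_eq_mul_single (i j : n) :
    ∑ k, S k j • single k i (1 : R) = S * single j i 1 := by
  ext a b
  simp [Matrix.sum_apply, Matrix.mul_apply, single_apply, ite_and]

theorem sum_smul_eq_skewSingle (hdet : IsUnit S.det) (hS : Sᵀ = S)
    {X : n → n → skewAdjointMatricesLieSubalgebra S}
    (hX : ∀ i j, (X i j : Matrix n n R) = single i j 1 - S⁻¹ * single j i 1 * S) (i j : n) :
    ∑ k, S k j • X i k = skewSingle hS i j := by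
  apply Subtype.ext
  push_cast [AddSubmonoidClass.coe_finsetSum, skewSingle, hX]
  calc ∑ k, S k j • (single i k 1 - S⁻¹ * single k i 1 * S)
      = ∑ k, S k j • single i k 1 - S⁻¹ * (∑ k, S k j • single k i 1) * S := by
        simp only [smul_sub, Finset.sum_sub_distrib, Finset.mul_sum, Finset.sum_mul,
          Matrix.mul_smul, Matrix.smul_mul]
    _ = (single i j 1 - single j i 1) * S := by
        rw [sum_smul_single_eq_single_mul hS, sum_smul_single_eq_mul_single,
          nonsing_inv_mul_cancel_left _ _ hdet, sub_mul]

end SkewAdjoint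

theorem UniversalEnvelopingAlgebra.commute_of_forall_commute_ι {R L : Type*} [CommRing R]
    [LieRing L] [LieAlgebra R L] {p : UniversalEnvelopingAlgebra R L}
    (h : ∀ y, Commute p (ι R y)) (u : UniversalEnvelopingAlgebra R L) : Commute p u := by
  obtain ⟨t, rfl⟩ : ∃ t, mkAlgHom R L t = u := RingCon.mkₐ_surjective _ u
  induction t using TensorAlgebra.induction with
  | algebraMap r => rw [AlgHom.commutes]; exact Algebra.commute_algebraMap_right r p
  | ι y => exact h y
  | mul a b ha hb => rw [map_mul]; exact ha.mul_right hb
  | add a b ha hb => rw [map_add]; exact ha.add_right hb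

section Commutator

attribute [local instance] LieRing.ofAssociativeRing

variable {A : Type*} [Ring A]

theorem Ring.lie_mul (x a b : A) : ⁅x, a * b⁆ = ⁅x, a⁆ * b + a * ⁅x, b⁆ := by
  simp only [Ring.lie_def]
  noncomm_ring

theorem Ring.lie_list_prod_ofFn (x : A) {N : ℕ} (f : Fin N → A) :
    ⁅x, (List.ofFn f).prod⁆ = ∑ i, (List.ofFn (update f i ⁅x, f i⁆)).prod := by
  induction N with
  | zero => simp [Ring.lie_def]
  | succ N ih =>
    rw [List.ofFn_succ, List.prod_cons, Ring.lie_mul, ih, Fin.sum_univ_succ, Finset.mul_sum]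
    congr 1
    · simp [List.ofFn_succ, Fin.succ_ne_zero]
    · refine Finset.sum_congr rfl fun i _ => ?_
      rw [List.ofFn_succ, List.prod_cons, update_of_ne (Fin.succ_ne_zero i).symm]
      congr 3
      ext j
      simp [update_apply, Fin.succ_inj]

variable {R : Type*} [CommSemiring R] [Algebra R A] {m : ℕ}

theorem lie_ncPfTerm (hm : m % 2 = 0) {x : A} {M : Matrix (Fin m) (Fin m) A}
    {Z : Matrix (Fin m) (Fin m) R}
    (hxM : ∀ i j, ⁅x, M i j⁆ = ∑ k, Z k i • M k j + ∑ k, Z k j • M i k) (g : Fin m → Fin m) :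
    ⁅x, ncPfTerm M g⁆ = ∑ t, ∑ k, Z k (g t) • ncPfTerm M (update g t k) := by
  rw [sum_eq_sum_pairFst_add_pairSnd hm, ncPfTerm, Ring.lie_list_prod_ofFn]
  refine Finset.sum_congr rfl fun i _ => ?_
  simp only [ncPfTerm_update_pairFst, ncPfTerm_update_pairSnd, hxM,
    ← MultilinearMap.mkPiAlgebraFin_apply (R := R), MultilinearMap.map_update_add,
    MultilinearMap.map_update_sum, MultilinearMap.map_update_smul]

variable [Algebra ℂ A]

theorem lie_ncPf {x : A} {M : Matrix (Fin m) (Fin m) A} {Z : Matrix (Fin m) (Fin m) ℂ}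
    (hxM : ∀ i j, ⁅x, M i j⁆ = ∑ k, Z k i • M k j + ∑ k, Z k j • M i k) :
    ⁅x, ncPf M⁆ = Z.trace • ncPf M := by
  by_cases hm : m % 2 = 0
  · simp only [ncPf_eq_sum_ncPfTerm hm, lie_smul, lie_sum, lie_ncPfTerm hm hxM,
      sum_sign_smul_sum_update, smul_comm Z.trace]
  · simp [ncPf, hm]

theorem commute_ncPf_skewSingle {S : Matrix (Fin m) (Fin m) ℂ} (hdet : IsUnit S.det)
    (hS : Sᵀ = S) (y : skewAdjointMatricesLieSubalgebra S) :
    Commute (ncPf (of fun i j => UniversalEnvelopingAlgebra.ι ℂ (skewSingle hS i j)))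
      (UniversalEnvelopingAlgebra.ι ℂ y) := by
  rw [Commute.symm_iff, commute_iff_lie_eq,
    lie_ncPf (Z := (y : Matrix (Fin m) (Fin m) ℂ)) fun i j => ?_,
    trace_eq_zero_of_isSkewAdjoint hdet (isSkewAdjoint_coe y), zero_smul]
  simp only [of_apply, ← LieHom.map_lie, lie_skewSingle, map_add, map_sum, map_smul]

end Commutator

theorem ncPf_is_central_general (n : ℕ)
    (S : Matrix (Fin (2 * n)) (Fin (2 * n)) ℂ) (hS : IsUnit S.det) (hSymm : Sᵀ = S)
    (𝒳 : Fin (2 * n) → Fin (2 * n) → skewAdjointMatricesLieSubalgebra S)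
    (h𝒳 : ∀ i j, (𝒳 i j : Matrix (Fin (2 * n)) (Fin (2 * n)) ℂ) =
      Matrix.single i j 1 - S⁻¹ * Matrix.single j i 1 * S) :
    (∀ i j : Fin (2 * n),
      (∑ k : Fin (2 * n), S k i • UniversalEnvelopingAlgebra.ι ℂ (𝒳 j k)) =
        - ∑ k : Fin (2 * n), S k j • UniversalEnvelopingAlgebra.ι ℂ (𝒳 i k)) ∧
    (∀ u : UniversalEnvelopingAlgebra ℂ (skewAdjointMatricesLieSubalgebra S),
      ncPf (Matrix.of fun i j : Fin (2 * n) =>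
          ∑ k : Fin (2 * n), S k j • UniversalEnvelopingAlgebra.ι ℂ (𝒳 i k)) * u =
        u * ncPf (Matrix.of fun i j : Fin (2 * n) =>
          ∑ k : Fin (2 * n), S k j • UniversalEnvelopingAlgebra.ι ℂ (𝒳 i k))) := by
  have hX : ∀ i j, ∑ k, S k j • UniversalEnvelopingAlgebra.ι ℂ (𝒳 i k) =
      UniversalEnvelopingAlgebra.ι ℂ (skewSingle hSymm i j) := fun i j => by
    simp only [← sum_smul_eq_skewSingle hS hSymm h𝒳, map_sum, map_smul]
  simp only [hX]
  exact ⟨fun i j => by rw [skewSingle_swap, map_neg],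
    UniversalEnvelopingAlgebra.commute_of_forall_commute_ι (commute_ncPf_skewSingle hS hSymm)⟩

/-- for an invertible symmetric `2n×2n` complex matrix `S`, with
`𝔤 = {X : Xᵀ S + S X = 0}` and `X_{i,j} = E_{i,j} − S⁻¹ E_{j,i} S ∈ 𝔤`
(encoded by the family `𝒳` of elements of `𝔤` with the prescribed matrix values),
the matrix `X̃_{i,j} = Σ_k S_{k,j} ι(X_{i,k})` over `U(𝔤)` is alternating, and its Pfaffian
is central in `U(𝔤)`. -/
theorem ncPf_is_central (n : ℕ) (hn : 1 ≤ n)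
    (S : Matrix (Fin (2 * n)) (Fin (2 * n)) ℂ) (hS : IsUnit S.det) (hSymm : Sᵀ = S)
    (𝒳 : Fin (2 * n) → Fin (2 * n) → skewAdjointMatricesLieSubalgebra S)
    (h𝒳 : ∀ i j, (𝒳 i j : Matrix (Fin (2 * n)) (Fin (2 * n)) ℂ) =
      Matrix.single i j 1 - S⁻¹ * Matrix.single j i 1 * S) :
    (∀ i j : Fin (2 * n),
      (∑ k : Fin (2 * n), S k i • UniversalEnvelopingAlgebra.ι ℂ (𝒳 j k)) =
        - ∑ k : Fin (2 * n), S k j • UniversalEnvelopingAlgebra.ι ℂ (𝒳 i k)) ∧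
    (∀ u : UniversalEnvelopingAlgebra ℂ (skewAdjointMatricesLieSubalgebra S),
      ncPf (Matrix.of fun i j : Fin (2 * n) =>
          ∑ k : Fin (2 * n), S k j • UniversalEnvelopingAlgebra.ι ℂ (𝒳 i k)) * u =
        u * ncPf (Matrix.of fun i j : Fin (2 * n) =>
          ∑ k : Fin (2 * n), S k j • UniversalEnvelopingAlgebra.ι ℂ (𝒳 i k))) :=
  ncPf_is_central_general n S hS hSymm 𝒳 h𝒳

end
end

section
/- In Λ: Ω^n = e_1 e_2 ⋯ e_{2n} · 2^n n! · Pf(𝑿), i.e. the n-th power of the 2-form Ω equals the top wedge e_1 ⋯ e_n e_{−n} ⋯ e_{−1} tensored with 2^n n! Pf(𝑿). -/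
open Matrix
open scoped TensorProduct

set_option synthInstance.maxHeartbeats 1000000
set_option maxHeartbeats 1000000

attribute [local instance] LieRing.ofAssociativeRing

noncomputable section

/-- The `N×N` matrix `J_N` with 1's on the anti-diagonal and 0's elsewhere. -/
def antiDiagJ (N : ℕ) : Matrix (Fin N) (Fin N) ℂ :=
  Matrix.of fun i j => if j = Fin.rev i then 1 else 0

/-- The orthogonal Lie algebra `𝔬_{2n} = {X : Xᵀ J_{2n} + J_{2n} X = 0}`. -/
abbrev oLie (n : ℕ) : LieSubalgebra ℂ (Matrix (Fin (2 * n)) (Fin (2 * n)) ℂ) :=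
  skewAdjointMatricesLieSubalgebra (antiDiagJ (2 * n))

/-- The universal enveloping algebra `U(𝔬_{2n})`. -/
abbrev Uo (n : ℕ) := UniversalEnvelopingAlgebra ℂ (oLie n)

/-- The canonical map `ι : 𝔬_{2n} → U(𝔬_{2n})`. -/
def uIota (n : ℕ) : oLie n →ₗ⁅ℂ⁆ Uo n := UniversalEnvelopingAlgebra.ι ℂ

/-- `Λ := ⋀(ℂ^{2n}) ⊗ U(𝔬_{2n})`. -/
abbrev Lam (n : ℕ) := ExteriorAlgebra ℂ (Fin (2 * n) → ℂ) ⊗[ℂ] Uo n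

/-- `e_i ∈ Λ`, the image of the `i`-th standard basis vector. -/
def eL (n : ℕ) (i : Fin (2 * n)) : Lam n :=
  ExteriorAlgebra.ι ℂ (Pi.single i 1) ⊗ₜ[ℂ] 1

/-- The embedding `U(𝔬_{2n}) → Λ`, `u ↦ 1 ⊗ u`. -/
def embU (n : ℕ) (u : Uo n) : Lam n := 1 ⊗ₜ[ℂ] u

/-! Expanding `Ω ^ n` gives a sum over all words `g : [2n] → [2n]` of
`e_{g 1} ⋯ e_{g (2n)} ⊗ ι(X_{g 1, −g 2}) ⋯ ι(X_{g (2n−1), −g (2n)})`. The exterior factor is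
alternating in `g`, so it vanishes unless `g` is a permutation `σ`, and then equals
`sgn σ · e_1 ⋯ e_{2n}`. What is left is the top form tensored with
`Σ_σ sgn σ ∏_k ι(X_{σ(2k−1), −σ(2k)}) = 2^n n! Pf(𝑿)`. -/

theorem List.prod_ofFn_tmul {R A B : Type*} [CommSemiring R] [Semiring A] [Algebra R A]
    [Semiring B] [Algebra R B] {m : ℕ} (a : Fin m → A) (b : Fin m → B) :
    (List.ofFn fun k => a k ⊗ₜ[R] b k).prod =
      (List.ofFn a).prod ⊗ₜ[R] (List.ofFn b).prod := by
  induction m with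
  | zero => simp [Algebra.TensorProduct.one_def]
  | succ m ih =>
    simp only [List.ofFn_succ, List.prod_cons, ih, Algebra.TensorProduct.tmul_mul_tmul]

theorem List.prod_ofFn_pairs {M : Type*} [Monoid M] {m : ℕ} (y : Fin (2 * m) → M) :
    (List.ofFn fun k : Fin m => y ⟨2 * k, by omega⟩ * y ⟨2 * k + 1, by omega⟩).prod =
      (List.ofFn y).prod := by
  rw [List.ofFn_mul' y, List.prod_flatten, List.map_ofFn]
  simp [List.ofFn_succ, Function.comp_def]

theorem Fintype.sum_pow_eq_sum_prod_ofFn {ι A : Type*} [Fintype ι] [Semiring A] (t : ι → A)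
    (m : ℕ) : (∑ i, t i) ^ m = ∑ f : Fin m → ι, (List.ofFn fun k => t (f k)).prod := by
  induction m with
  | zero => simp
  | succ m ih =>
    rw [pow_succ', ih, Finset.sum_mul_sum, ← (Fin.consEquiv fun _ => ι).sum_comp,
      Fintype.sum_prod_type]
    simp [Fin.consEquiv, List.ofFn_succ]

def finTwoMulArrowEquiv (m : ℕ) (ι : Type*) : (Fin (2 * m) → ι) ≃ (Fin m → ι × ι) :=
  ((finProdFinEquiv.trans (finCongr (Nat.mul_comm m 2))).arrowCongr (Equiv.refl ι)).symm.trans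
    ((Equiv.curry _ _ _).trans (Equiv.piCongrRight fun _ => piFinTwoEquiv fun _ => ι))

theorem finTwoMulArrowEquiv_apply {m : ℕ} {ι : Type*} (g : Fin (2 * m) → ι) (k : Fin m) :
    finTwoMulArrowEquiv m ι g k = (g ⟨2 * k, by omega⟩, g ⟨2 * k + 1, by omega⟩) := by
  simp only [finTwoMulArrowEquiv, Equiv.trans_apply, Equiv.piCongrRight_apply]
  exact Prod.ext (congrArg g (Fin.ext (by simp)))
    (congrArg g (Fin.ext (by simp [Nat.add_comm])))

theorem Fintype.sum_sum_pow_eq_sum_prod_pairs {ι A : Type*} [Fintype ι] [Semiring A]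
    (t : ι → ι → A) (m : ℕ) :
    (∑ i, ∑ j, t i j) ^ m = ∑ g : Fin (2 * m) → ι,
      (List.ofFn fun k : Fin m => t (g ⟨2 * k, by omega⟩) (g ⟨2 * k + 1, by omega⟩)).prod := by
  rw [← Fintype.sum_prod_type', Fintype.sum_pow_eq_sum_prod_ofFn,
    ← (finTwoMulArrowEquiv m ι).sum_comp]
  simp only [finTwoMulArrowEquiv_apply]

theorem Fintype.sum_eq_sum_perm_of_not_injective {ι M : Type*} [Fintype ι] [DecidableEq ι]
    [AddCommMonoid M] (F : (ι → ι) → M) (hF : ∀ g, ¬Function.Injective g → F g = 0) :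
    ∑ g, F g = ∑ σ : Equiv.Perm ι, F σ :=
  (Fintype.sum_of_injective (fun σ : Equiv.Perm ι => (σ : ι → ι)) DFunLike.coe_injective
    (fun σ => F σ) F
    (fun g hg => hF g fun hinj => hg ⟨Equiv.ofBijective g hinj.bijective_of_finite, rfl⟩)
    fun _ => rfl).symm

def Matrix.pfaffianSum {A : Type*} [Ring A] {m : ℕ}
    (M : Matrix (Fin (2 * m)) (Fin (2 * m)) A) : A :=
  ∑ σ : Equiv.Perm (Fin (2 * m)), (Equiv.Perm.sign σ : ℤ) •
    (List.ofFn fun k : Fin m => M (σ ⟨2 * k, by omega⟩) (σ ⟨2 * k + 1, by omega⟩)).prod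

theorem ncPf_eq_smul_pfaffianSum {A : Type*} [Ring A] [Algebra ℂ A] {m : ℕ}
    (M : Matrix (Fin (2 * m)) (Fin (2 * m)) A) :
    ncPf M = ((2 : ℂ) ^ m * m.factorial)⁻¹ • M.pfaffianSum := by
  have hm : 2 * m / 2 = m := by omega
  rw [ncPf, dif_pos (by omega), Matrix.pfaffianSum]
  congr 1
  · rw [hm]
  · refine Finset.sum_congr rfl fun σ _ => ?_
    rw [List.ofFn_congr hm]
    rfl

theorem ExteriorAlgebra.sum_ι_mul_ι_tmul_pow {R V A : Type*} [CommRing R] [AddCommGroup V]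
    [Module R V] [Ring A] [Algebra R A] {m : ℕ} (v : Fin (2 * m) → V)
    (M : Matrix (Fin (2 * m)) (Fin (2 * m)) A) :
    (∑ i, ∑ j, (ι R (v i) * ι R (v j)) ⊗ₜ[R] M i j) ^ m =
      ιMulti R (2 * m) v ⊗ₜ[R] M.pfaffianSum := by
  have hterm : ∀ g : Fin (2 * m) → Fin (2 * m),
      (List.ofFn fun k : Fin m =>
        (ι R (v (g ⟨2 * k, by omega⟩)) * ι R (v (g ⟨2 * k + 1, by omega⟩))) ⊗ₜ[R]
          M (g ⟨2 * k, by omega⟩) (g ⟨2 * k + 1, by omega⟩)).prod =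
      ιMulti R (2 * m) (v ∘ g) ⊗ₜ[R]
        (List.ofFn fun k : Fin m => M (g ⟨2 * k, by omega⟩) (g ⟨2 * k + 1, by omega⟩)).prod := by
    intro g
    rw [List.prod_ofFn_tmul, List.prod_ofFn_pairs fun j => ι R (v (g j)), ιMulti_apply]
    rfl
  rw [Fintype.sum_sum_pow_eq_sum_prod_pairs]
  simp_rw [hterm]
  rw [Fintype.sum_eq_sum_perm_of_not_injective _ fun g hg => by
    rw [(ιMulti R _).map_eq_zero_of_not_injective _ fun h => hg h.of_comp,
      TensorProduct.zero_tmul]]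
  simp_rw [AlternatingMap.map_perm, Units.smul_def, TensorProduct.smul_tmul,
    ← TensorProduct.tmul_sum]
  rfl

theorem omega_pow_eq_ncPfaffian_general (n : ℕ)
    (𝒳 : Fin (2 * n) → Fin (2 * n) → oLie n) :
    (∑ i : Fin (2 * n), ∑ j : Fin (2 * n),
        eL n i * eL n (Fin.rev j) * embU n (uIota n (𝒳 i j))) ^ n =
      (List.ofFn fun i : Fin (2 * n) => eL n i).prod *
        (((2 : ℂ) ^ n * n.factorial) •
          embU n (ncPf (Matrix.of fun i j : Fin (2 * n) => uIota n (𝒳 i (Fin.rev j))))) := by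
  set M : Matrix (Fin (2 * n)) (Fin (2 * n)) (Uo n) :=
    Matrix.of fun i j => uIota n (𝒳 i (Fin.rev j))
  set e : Fin (2 * n) → Fin (2 * n) → ℂ := fun i => Pi.single i 1
  have hΩ : ∑ i, ∑ j, eL n i * eL n (Fin.rev j) * embU n (uIota n (𝒳 i j)) =
      ∑ i, ∑ j, (ExteriorAlgebra.ι ℂ (e i) * ExteriorAlgebra.ι ℂ (e j)) ⊗ₜ[ℂ] M i j := by
    refine Finset.sum_congr rfl fun i _ => Fintype.sum_equiv Fin.revPerm _ _ fun j => ?_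
    simp [eL, embU, M, e, Algebra.TensorProduct.tmul_mul_tmul]
  have htop : (List.ofFn (eL n)).prod = ExteriorAlgebra.ιMulti ℂ (2 * n) e ⊗ₜ[ℂ] 1 := by
    have := List.prod_ofFn_tmul (R := ℂ) (fun i => ExteriorAlgebra.ι ℂ (e i)) fun _ => (1 : Uo n)
    rwa [List.ofFn_const, List.prod_replicate, one_pow, ← ExteriorAlgebra.ιMulti_apply] at this
  have hc : (2 : ℂ) ^ n * n.factorial ≠ 0 := by simp [Nat.factorial_ne_zero]
  rw [hΩ, ExteriorAlgebra.sum_ι_mul_ι_tmul_pow, htop, ncPf_eq_smul_pfaffianSum, embU,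
    TensorProduct.tmul_smul, smul_smul, mul_inv_cancel₀ hc, one_smul,
    Algebra.TensorProduct.tmul_mul_tmul, one_mul, mul_one]

/-- in `Λ = ⋀(ℂ^{2n}) ⊗ U(𝔬_{2n})`, with
`Ω = Σ_{i,j∈[2n]} e_i e_{−j} ι(X_{i,j})` (0-indexed, `−j` is `Fin.rev j`), one has
`Ω^n = e_1 ⋯ e_{2n} · 2^n n! · Pf(𝑿)`, where `Pf(𝑿)` is the noncommutative Pfaffian of the
alternating matrix `(ι(X_{i,−j}))_{i,j}`. -/
theorem omega_pow_eq_ncPfaffian (n : ℕ) (hn : 1 ≤ n)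
    (𝒳 : Fin (2 * n) → Fin (2 * n) → oLie n)
    (h𝒳 : ∀ i j, (𝒳 i j : Matrix (Fin (2 * n)) (Fin (2 * n)) ℂ) =
      Matrix.single i j 1 - Matrix.single (Fin.rev j) (Fin.rev i) 1) :
    (∑ i : Fin (2 * n), ∑ j : Fin (2 * n),
        eL n i * eL n (Fin.rev j) * embU n (uIota n (𝒳 i j))) ^ n =
      (List.ofFn fun i : Fin (2 * n) => eL n i).prod *
        (((2 : ℂ) ^ n * n.factorial) •
          embU n (ncPf (Matrix.of fun i j : Fin (2 * n) => uIota n (𝒳 i (Fin.rev j))))) :=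
  omega_pow_eq_ncPfaffian_general n 𝒳

end
end

section
/- For all integers p, q ≥ 0, in Λ: Θ^p = 2^p p! Σ_{I ⊆ [n], |I|=2p} e_I · Pf(b_I) and Θ'^q = 2^q q! Σ_{J ⊆ [n], |J|=2q} e_{−J} · Pf(c_J). -/
open Matrix
open scoped TensorProduct

set_option synthInstance.maxHeartbeats 1000000
set_option maxHeartbeats 1000000

attribute [local instance 100] LieRing.ofAssociativeRing

noncomputable section

/-- `Θ := Σ_{i,j∈[n]} e_i e_j b_{i,j}` with `b_{i,j} = ι(X_{i,−j})`. -/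
def ThetaL (n : ℕ) (𝒳 : Fin (2 * n) → Fin (2 * n) → oLie n) : Lam n :=
  ∑ i : Fin n, ∑ j : Fin n,
    eL n (Fin.castLE (by omega) i) * eL n (Fin.castLE (by omega) j) *
      embU n (uIota n (𝒳 (Fin.castLE (by omega) i) (Fin.rev (Fin.castLE (by omega) j))))

/-- `Θ' := Σ_{i,j∈[n]} e_{−j} e_{−i} c_{i,j}` with `c_{i,j} = ι(X_{−j,i})`. -/
def ThetaL' (n : ℕ) (𝒳 : Fin (2 * n) → Fin (2 * n) → oLie n) : Lam n :=
  ∑ i : Fin n, ∑ j : Fin n,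
    eL n (Fin.rev (Fin.castLE (by omega) j)) * eL n (Fin.rev (Fin.castLE (by omega) i)) *
      embU n (uIota n (𝒳 (Fin.rev (Fin.castLE (by omega) j)) (Fin.castLE (by omega) i)))

/-- Noncommutative Pfaffian of the submatrix of `M` with rows and columns in `I`. -/
def ncPfSub {A : Type*} [Ring A] [Algebra ℂ A] {N : ℕ} (M : Matrix (Fin N) (Fin N) A)
    (I : Finset (Fin N)) : A :=
  ncPf (Matrix.of fun α β : Fin I.card => M (I.orderEmbOfFin rfl α) (I.orderEmbOfFin rfl β))

/-- `e_I := e_{i_1} ⋯ e_{i_r} ∈ Λ` for `I = {i_1 < ⋯ < i_r} ⊆ [n]`. -/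
def eLProd (n : ℕ) (I : Finset (Fin n)) : Lam n :=
  (List.ofFn fun α : Fin I.card =>
    eL n (Fin.castLE (by omega) (I.orderEmbOfFin rfl α))).prod

/-- `e_{−J} := e_{−j_s} ⋯ e_{−j_1} ∈ Λ` for `J = {j_1 < ⋯ < j_s} ⊆ [n]`. -/
def eLProdNeg (n : ℕ) (J : Finset (Fin n)) : Lam n :=
  ((List.ofFn fun β : Fin J.card =>
    eL n (Fin.rev (Fin.castLE (by omega) (J.orderEmbOfFin rfl β)))).reverse).prod

/-!
Expanding the power, `Θ^p` is the sum over words `a : Fin (2p) → [n]` of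
`e_{a₁} ⋯ e_{a_{2p}} ⊗ b_{a₁a₂} ⋯ b_{a_{2p-1}a_{2p}}`, because the `e`'s and the `b`'s live
in different tensor factors. Words with a repeated letter vanish in the exterior algebra, and an
injective word is `I.orderEmbOfFin ∘ σ` for a unique subset `I` and permutation `σ`, with
`e_a = sgn σ · e_I`; the sum over `σ` is `2^p p! Pf(b_I)` by the definition of the Pfaffian.
For `Θ'`, swapping `e_{-j} e_{-i}` costs a sign `(-1)^q` in `Θ'^q`, which is exactly the sign
`(-1)^(2q choose 2)` of reversing the order of the factors of `e_{-J}`.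
-/

open ExteriorAlgebra

section PairedProd

variable {α U : Type*} [Monoid U]

def pairedProd (g : α → α → U) {p : ℕ} (a : Fin (2 * p) → α) : U :=
  (List.ofFn fun k : Fin p =>
    g (a ⟨2 * k.1, by have := k.2; omega⟩) (a ⟨2 * k.1 + 1, by have := k.2; omega⟩)).prod

@[simp]
theorem pairedProd_zero (g : α → α → U) (a : Fin (2 * 0) → α) : pairedProd g a = 1 :=
  rfl

theorem pairedProd_cons_cons (g : α → α → U) {p : ℕ} (i j : α) (a : Fin (2 * p) → α) :
    pairedProd (p := p + 1) g (Fin.cons i (Fin.cons j a)) = g i j * pairedProd g a := by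
  rw [pairedProd, List.ofFn_succ, List.prod_cons]
  rfl

end PairedProd

theorem Fintype.sum_cons_cons {α A : Type*} [Fintype α] [AddCommMonoid A] {m : ℕ}
    (F : (Fin (m + 2) → α) → A) :
    ∑ i, ∑ j, ∑ a : Fin m → α, F (Fin.cons i (Fin.cons j a)) = ∑ a, F a := by
  rw [← (Fin.consEquiv fun _ => α).sum_comp, Fintype.sum_prod_type]
  refine Fintype.sum_congr _ _ fun i => ?_
  rw [← (Fin.consEquiv fun _ => α).sum_comp, Fintype.sum_prod_type]
  rfl

section InjectiveWords

open Finset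

variable {α A : Type*} [LinearOrder α] [AddCommMonoid A] {m : ℕ}

theorem image_univ_orderEmbOfFin_comp (I : Finset α) (h : I.card = m) (σ : Equiv.Perm (Fin m)) :
    univ.image (I.orderEmbOfFin h ∘ σ) = I := by
  rw [← coe_inj, coe_image, coe_univ, Set.image_univ, σ.surjective.range_comp,
    range_orderEmbOfFin]

theorem exists_perm_of_image_univ_eq {I : Finset α} (h : I.card = m) {a : Fin m → α}
    (ha : univ.image a = I) : ∃ σ : Equiv.Perm (Fin m), I.orderEmbOfFin h ∘ σ = a := by
  have hinj : Function.Injective a := by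
    rw [← Set.injOn_univ, ← coe_univ, ← card_image_iff, ha, h, card_univ, Fintype.card_fin]
  have hsort : a ∘ Tuple.sort a = I.orderEmbOfFin h :=
    orderEmbOfFin_unique h (fun k => ha ▸ mem_image_of_mem a (mem_univ _))
      ((Tuple.monotone_sort a).strictMono_of_injective (hinj.comp (Tuple.sort a).injective))
  refine ⟨(Tuple.sort a).symm, ?_⟩
  rw [← hsort, Function.comp_assoc, Equiv.self_comp_symm, Function.comp_id]

theorem sum_image_univ_eq_sum_perm [Fintype α] (I : Finset α) (h : I.card = m)
    (F : (Fin m → α) → A) :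
    ∑ a with univ.image a = I, F a =
      ∑ σ : Equiv.Perm (Fin m), F (I.orderEmbOfFin h ∘ σ) := by
  symm
  refine sum_bij (fun σ _ => I.orderEmbOfFin h ∘ σ) (fun σ _ => ?_) (fun σ _ τ _ hστ => ?_)
    (fun a ha => ?_) fun _ _ => rfl
  · simpa using image_univ_orderEmbOfFin_comp I h σ
  · exact Equiv.ext fun k => (I.orderEmbOfFin h).injective (congrFun hστ k)
  · obtain ⟨σ, hσ⟩ := exists_perm_of_image_univ_eq h (mem_filter.mp ha).2
    exact ⟨σ, mem_univ _, hσ⟩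

theorem sum_eq_sum_finset_sum_perm [Fintype α] (F : (Fin m → α) → A)
    (hF : ∀ a, ¬ Function.Injective a → F a = 0) :
    ∑ a, F a = ∑ I : Finset α,
      if h : I.card = m then ∑ σ : Equiv.Perm (Fin m), F (I.orderEmbOfFin h ∘ σ) else 0 := by
  rw [← sum_fiberwise univ (fun a => univ.image a) F]
  refine sum_congr rfl fun I _ => ?_
  split_ifs with h
  · exact sum_image_univ_eq_sum_perm I h F
  · refine sum_eq_zero fun a ha => hF a fun hinj => h ?_
    rw [← (mem_filter.mp ha).2, card_image_of_injective _ hinj, card_univ, Fintype.card_fin]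

end InjectiveWords

section Expansion

variable {R M U α : Type*} [CommRing R] [AddCommGroup M] [Module R M] [Ring U] [Algebra R U]

theorem ιMulti_comp_cons_cons (v : α → M) {m : ℕ} (i j : α) (a : Fin m → α) :
    ιMulti R (m + 2) (v ∘ Fin.cons i (Fin.cons j a)) =
      ι R (v i) * ι R (v j) * ιMulti R m (v ∘ a) := by
  rw [ιMulti_succ_apply, ιMulti_succ_apply, mul_assoc]
  rfl

theorem pow_sum_ι_mul_ι_tmul [Fintype α] (v : α → M) (g : α → α → U) (p : ℕ) :
    (∑ i, ∑ j, (ι R (v i) * ι R (v j)) ⊗ₜ[R] g i j) ^ p =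
      ∑ a : Fin (2 * p) → α, ιMulti R (2 * p) (v ∘ a) ⊗ₜ[R] pairedProd g a := by
  induction p with
  | zero => simp [Algebra.TensorProduct.one_def]
  | succ p ih =>
    rw [pow_succ', ih, Finset.sum_mul]
    refine Eq.trans ?_ (Fintype.sum_cons_cons (m := 2 * p) _)
    refine Fintype.sum_congr _ _ fun i => ?_
    rw [Finset.sum_mul]
    refine Fintype.sum_congr _ _ fun j => ?_
    rw [Finset.mul_sum]
    refine Fintype.sum_congr _ _ fun a => ?_
    rw [Algebra.TensorProduct.tmul_mul_tmul, pairedProd_cons_cons, ← ιMulti_comp_cons_cons]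
    rfl

theorem pow_sum_ι_mul_ι_tmul_eq_sum_finset [Fintype α] [LinearOrder α] (v : α → M)
    (g : α → α → U) (p : ℕ) :
    (∑ i, ∑ j, (ι R (v i) * ι R (v j)) ⊗ₜ[R] g i j) ^ p =
      ∑ I : Finset α, if h : I.card = 2 * p then
        ιMulti R (2 * p) (v ∘ I.orderEmbOfFin h) ⊗ₜ[R]
          ∑ σ : Equiv.Perm (Fin (2 * p)),
            (Equiv.Perm.sign σ : ℤ) • pairedProd g (I.orderEmbOfFin h ∘ σ)
      else 0 := by
  rw [pow_sum_ι_mul_ι_tmul, sum_eq_sum_finset_sum_perm]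
  · refine Finset.sum_congr rfl fun I _ => dite_congr rfl (fun h => ?_) fun _ => rfl
    rw [TensorProduct.tmul_sum]
    refine Finset.sum_congr rfl fun σ _ => ?_
    rw [← Function.comp_assoc, AlternatingMap.map_perm, Units.smul_def,
      TensorProduct.smul_tmul]
  · intro a ha
    rw [AlternatingMap.map_eq_zero_of_not_injective _ _ fun hv => ha hv.of_comp,
      TensorProduct.zero_tmul]

end Expansion

section Pfaffian

variable {A : Type*} [Ring A] [Algebra ℂ A]

theorem ncPf_eq_smul_sum {p : ℕ} (N : Matrix (Fin (2 * p)) (Fin (2 * p)) A) :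
    ncPf N = ((2 : ℂ) ^ p * p.factorial)⁻¹ •
      ∑ σ : Equiv.Perm (Fin (2 * p)), (Equiv.Perm.sign σ : ℤ) • pairedProd N σ := by
  have hp : 2 * p / 2 = p := by omega
  rw [ncPf, dif_pos (by omega)]
  -- `List.ofFn_congr` is a congruence lemma, which lets `simp` rewrite the length `2 * p / 2`.
  simp only [hp]
  rfl

theorem ncPfSub_eq_ncPf {N m : ℕ} (M : Matrix (Fin N) (Fin N) A) {I : Finset (Fin N)}
    (h : I.card = m) :
    ncPfSub M I = ncPf (Matrix.of fun k l => M (I.orderEmbOfFin h k) (I.orderEmbOfFin h l)) := by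
  subst h
  rfl

theorem nsmul_ncPfSub {N p : ℕ} (M : Matrix (Fin N) (Fin N) A) {I : Finset (Fin N)}
    (h : I.card = 2 * p) :
    (2 ^ p * p.factorial : ℕ) • ncPfSub M I =
      ∑ σ : Equiv.Perm (Fin (2 * p)),
        (Equiv.Perm.sign σ : ℤ) • pairedProd M (I.orderEmbOfFin h ∘ σ) := by
  rw [ncPfSub_eq_ncPf M h, ncPf_eq_smul_sum, ← Nat.cast_smul_eq_nsmul ℂ, smul_smul,
    Nat.cast_mul, Nat.cast_pow, Nat.cast_ofNat,
    mul_inv_cancel₀ (by simp [Nat.factorial_ne_zero]), one_smul]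
  rfl

end Pfaffian

theorem List.prod_mul_of_forall_anticomm {A : Type*} [Ring A] {x : A} {l : List A}
    (hl : ∀ y ∈ l, y * x = -(x * y)) :
    l.prod * x = ((-1 : ℤ) ^ l.length) • (x * l.prod) := by
  induction l with
  | nil => simp
  | cons y t ih =>
    rw [List.prod_cons, mul_assoc, ih fun z hz => hl z (List.mem_cons_of_mem y hz),
      mul_smul_comm, ← mul_assoc, hl y List.mem_cons_self, List.length_cons, pow_succ]
    simp [mul_assoc]

theorem List.prod_reverse_of_pairwise_anticomm {A : Type*} [Ring A] {l : List A}
    (hl : l.Pairwise fun x y => x * y = -(y * x)) :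
    l.reverse.prod = ((-1 : ℤ) ^ l.length.choose 2) • l.prod := by
  induction l with
  | nil => simp
  | cons x t ih =>
    obtain ⟨hx, ht⟩ := List.pairwise_cons.mp hl
    rw [List.reverse_cons, List.prod_append, List.prod_singleton, ih ht, smul_mul_assoc,
      prod_mul_of_forall_anticomm fun y hy => by rw [hx y hy, neg_neg], smul_smul, ← pow_add,
      List.prod_cons, List.length_cons, Nat.choose_succ_succ, Nat.choose_one_right, add_comm]

theorem neg_one_pow_choose_two_two_mul (q : ℕ) : (-1 : ℤ) ^ ((2 * q).choose 2) = (-1) ^ q := by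
  rw [Nat.choose_two_right, mul_assoc, Nat.mul_div_cancel_left _ two_pos]
  rcases q.even_or_odd with hq | hq
  · rw [hq.neg_one_pow, (hq.mul_right _).neg_one_pow]
  · have h2q : Odd (2 * q - 1) := ⟨q - 1, by obtain ⟨r, rfl⟩ := hq; omega⟩
    rw [hq.neg_one_pow, (hq.mul h2q).neg_one_pow]

section Lam

variable {n : ℕ}

theorem eL_mul_eL_mul_embU (i j : Fin (2 * n)) (u : Uo n) :
    eL n i * eL n j * embU n u =
      (ι ℂ (Pi.single i 1) * ι ℂ (Pi.single j 1)) ⊗ₜ[ℂ] u := by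
  simp only [eL, embU, Algebra.TensorProduct.tmul_mul_tmul, mul_one, one_mul]

theorem eL_mul_eL_anticomm (i j : Fin (2 * n)) : eL n i * eL n j = -(eL n j * eL n i) := by
  rw [eL, eL, Algebra.TensorProduct.tmul_mul_tmul, Algebra.TensorProduct.tmul_mul_tmul,
    eq_neg_of_add_eq_zero_left (ι_add_mul_swap _ _), TensorProduct.neg_tmul]

def eLProdMap (n : ℕ) (φ : Fin n → Fin (2 * n)) (I : Finset (Fin n)) : Lam n :=
  (List.ofFn fun k : Fin I.card => eL n (φ (I.orderEmbOfFin rfl k))).prod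

theorem eLProdMap_eq_ιMulti_tmul (φ : Fin n → Fin (2 * n)) {I : Finset (Fin n)} {m : ℕ}
    (h : I.card = m) :
    eLProdMap n φ I =
      ιMulti ℂ m (fun k => Pi.single (φ (I.orderEmbOfFin h k)) 1) ⊗ₜ[ℂ] (1 : Uo n) := by
  subst h
  rw [eLProdMap, ιMulti_apply, ← Algebra.TensorProduct.includeLeft_apply (S := ℂ),
    map_list_prod, List.map_ofFn]
  rfl

theorem pow_sum_eL_mul_eL_mul_embU (φ : Fin n → Fin (2 * n)) (g : Fin n → Fin n → Uo n)
    (p : ℕ) :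
    (∑ i, ∑ j, eL n (φ i) * eL n (φ j) * embU n (g i j)) ^ p =
      (2 ^ p * p.factorial : ℕ) • ∑ I : Finset (Fin n),
        if I.card = 2 * p then eLProdMap n φ I * embU n (ncPfSub (Matrix.of g) I) else 0 := by
  simp only [eL_mul_eL_mul_embU]
  rw [pow_sum_ι_mul_ι_tmul_eq_sum_finset (fun i => Pi.single (φ i) 1), Finset.smul_sum]
  refine Finset.sum_congr rfl fun I _ => ?_
  split_ifs with h
  · rw [eLProdMap_eq_ιMulti_tmul φ h, embU, Algebra.TensorProduct.tmul_mul_tmul, one_mul,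
      mul_one, ← TensorProduct.tmul_smul, nsmul_ncPfSub _ h]
    rfl
  · rw [smul_zero]

theorem eLProdNeg_eq (J : Finset (Fin n)) :
    eLProdNeg n J = ((-1 : ℤ) ^ J.card.choose 2) •
      eLProdMap n (fun j => Fin.rev (Fin.castLE (by omega) j)) J := by
  rw [eLProdNeg, List.prod_reverse_of_pairwise_anticomm
    (List.pairwise_ofFn.mpr fun _ _ _ => eL_mul_eL_anticomm _ _), List.length_ofFn]
  rfl

theorem ThetaL'_eq_neg (𝒳 : Fin (2 * n) → Fin (2 * n) → oLie n) :
    ThetaL' n 𝒳 = -∑ i : Fin n, ∑ j : Fin n,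
      eL n (Fin.rev (Fin.castLE (by omega) i)) * eL n (Fin.rev (Fin.castLE (by omega) j)) *
        embU n (uIota n (𝒳 (Fin.rev (Fin.castLE (by omega) j)) (Fin.castLE (by omega) i))) := by
  rw [ThetaL', ← Finset.sum_neg_distrib]
  refine Finset.sum_congr rfl fun i _ => ?_
  rw [← Finset.sum_neg_distrib]
  refine Finset.sum_congr rfl fun j _ => ?_
  rw [eL_mul_eL_anticomm, neg_mul]

end Lam

/-- `Θ^p = 2^p p! Σ_{|I|=2p} e_I Pf(b_I)` and
`Θ'^q = 2^q q! Σ_{|J|=2q} e_{−J} Pf(c_J)` in `Λ`, where `b_{i,j} = ι(X_{i,−j})`,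
`c_{i,j} = ι(X_{−j,i})`. -/
theorem theta_pow_expansion_nc (n : ℕ)
    (𝒳 : Fin (2 * n) → Fin (2 * n) → oLie n)
    (p q : ℕ) :
    ThetaL n 𝒳 ^ p =
      (2 ^ p * p.factorial : ℕ) •
        (∑ I : Finset (Fin n),
          if I.card = 2 * p then
            eLProd n I * embU n (ncPfSub (Matrix.of fun i j : Fin n =>
              uIota n (𝒳 (Fin.castLE (by omega) i) (Fin.rev (Fin.castLE (by omega) j)))) I)
          else 0) ∧
    ThetaL' n 𝒳 ^ q =
      (2 ^ q * q.factorial : ℕ) •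
        (∑ J : Finset (Fin n),
          if J.card = 2 * q then
            eLProdNeg n J * embU n (ncPfSub (Matrix.of fun i j : Fin n =>
              uIota n (𝒳 (Fin.rev (Fin.castLE (by omega) j)) (Fin.castLE (by omega) i))) J)
          else 0) := by
  refine ⟨pow_sum_eL_mul_eL_mul_embU _ _ p, ?_⟩
  rw [ThetaL'_eq_neg, ← neg_one_zsmul, smul_pow, pow_sum_eL_mul_eL_mul_embU, smul_comm,
    Finset.smul_sum]
  congr 1
  refine Finset.sum_congr rfl fun J _ => ?_
  split_ifs with h
  · rw [eLProdNeg_eq, h, neg_one_pow_choose_two_two_mul, smul_mul_assoc]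
  · rw [smul_zero]

end
end
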